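/- With L(j,t) as defined above, whenever j − t ≥ k we have L(j,t) = a_t. -/

import Mathlib

/-!
Write `m = j - t` and `c = Λ - 1`. Going down from `t = j`, the recursion for `L` keeps the
invariant `c · L(j,t) = a_{j+1} - Σ_{i ≤ m} λ_i a_{j+1-i} + (Λ_m - 1) a_t`: lowering `t` by one
moves exactly the term `λ_{m+1} a_{t+1}` into the sum. Once `m ≥ k` the sum is the whole
recurrence for `a_{j+1}` and `Λ_m = Λ`, so the invariant collapses to `c · L(j,t) = c · a_t`.
-/

/-- `Λ_j = λ₁ + ⋯ + λ_j`. -/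
def Lam (lam : ℕ → ℕ) (j : ℕ) : ℕ := ∑ i ∈ Finset.Icc 1 j, lam i

open Finset

theorem sum_Icc_one_eq_of_le {M : Type*} [AddCommMonoid M] {f : ℕ → M} {k m : ℕ}
    (hf : ∀ i, k < i → f i = 0) (hkm : k ≤ m) :
    ∑ i ∈ Icc 1 m, f i = ∑ i ∈ Icc 1 k, f i :=
  (sum_subset (Icc_subset_Icc_right hkm) fun i hi hik => hf i <| by
    simp only [mem_Icc] at hi hik; omega).symm

theorem Lam_succ (lam : ℕ → ℕ) (m : ℕ) : Lam lam (m + 1) = Lam lam m + lam (m + 1) :=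
  sum_Icc_succ_top (by omega) lam

theorem Lam_eq_of_le {lam : ℕ → ℕ} {k m : ℕ} (hzero : ∀ i, k < i → lam i = 0) (hkm : k ≤ m) :
    Lam lam m = Lam lam k :=
  sum_Icc_one_eq_of_le hzero hkm

theorem mul_L_eq {lam : ℕ → ℕ} {a : ℤ → ℚ} {L : ℕ → ℕ → ℚ} {c : ℚ} (hc : c ≠ 0)
    (hLjj : ∀ j : ℕ, L j j = (a (j + 1) - a j) / c)
    (hLrec : ∀ j t : ℕ, t < j →
      L j t = L j (t + 1) - ((Lam lam (j - t) : ℚ) - 1) * (a (t + 1) - a t) / c)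
    (m t : ℕ) :
    c * L (t + m) t = a (t + m + 1) - ∑ i ∈ Icc 1 m, (lam i : ℚ) * a (t + m + 1 - i)
      + ((Lam lam m : ℚ) - 1) * a t := by
  induction m generalizing t with
  | zero =>
    simp [hLjj, Lam, mul_div_cancel₀ _ hc, sub_eq_add_neg]
  | succ m ih =>
    have hstep := hLrec (t + (m + 1)) t (by omega)
    rw [show t + (m + 1) - t = m + 1 by omega, show t + (m + 1) = t + 1 + m by omega] at hstep
    rw [show t + (m + 1) = t + 1 + m by omega, hstep, mul_sub, ih (t + 1),
      sum_Icc_succ_top (by omega), Lam_succ, mul_div_cancel₀ _ hc]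
    push_cast
    ring_nf

theorem stmt9_general (k : ℕ) (lam : ℕ → ℕ) (hzero : ∀ i, k < i → lam i = 0)
    (hΛ : 2 ≤ Lam lam k)
    (a : ℤ → ℚ)
    (harec : ∀ n : ℤ, 1 ≤ n → a n = ∑ i ∈ Finset.Icc 1 k, (lam i : ℚ) * a (n - i))
    (L : ℕ → ℕ → ℚ)
    (hLjj : ∀ j : ℕ, L j j = (a (j + 1) - a j) / ((Lam lam k : ℚ) - 1))
    (hLrec : ∀ j t : ℕ, t < j →
      L j t = L j (t + 1) -
        ((Lam lam (j - t) : ℚ) - 1) * (a (t + 1) - a t) / ((Lam lam k : ℚ) - 1)) :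
    ∀ j t : ℕ, t ≤ j → k ≤ j - t → L j t = a t := by
  intro j t htj hkjt
  obtain ⟨m, rfl⟩ : ∃ m, j = t + m := ⟨j - t, by omega⟩
  have hkm : k ≤ m := by omega
  have hc : (Lam lam k : ℚ) - 1 ≠ 0 := by
    have : (2 : ℚ) ≤ Lam lam k := by exact_mod_cast hΛ
    linarith
  have hsum : ∑ i ∈ Icc 1 m, (lam i : ℚ) * a (t + m + 1 - i) = a (t + m + 1) := by
    rw [sum_Icc_one_eq_of_le (fun i hi => by simp [hzero i hi]) hkm, harec _ (by omega)]
  have hinv := mul_L_eq hc hLjj hLrec m t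
  rw [hsum, Lam_eq_of_le hzero hkm, sub_self, zero_add] at hinv
  exact mul_left_cancel₀ hc hinv

/-- whenever `j - t ≥ k`, `L(j,t) = a_t`. -/
theorem stmt9 (k : ℕ) (lam : ℕ → ℕ) (hk : 1 ≤ k)
    (h1 : 1 ≤ lam 1) (hkpos : 1 ≤ lam k) (hzero : ∀ i, k < i → lam i = 0)
    (hΛ : 2 ≤ Lam lam k)
    (a : ℤ → ℚ)
    (ha0 : ∀ i : ℤ, i ≤ 0 → a i = 1)
    (harec : ∀ n : ℤ, 1 ≤ n → a n = ∑ i ∈ Finset.Icc 1 k, (lam i : ℚ) * a (n - i))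
    (L : ℕ → ℕ → ℚ)
    (hLjj : ∀ j : ℕ, L j j = (a (j + 1) - a j) / ((Lam lam k : ℚ) - 1))
    (hLrec : ∀ j t : ℕ, t < j →
      L j t = L j (t + 1) -
        ((Lam lam (j - t) : ℚ) - 1) * (a (t + 1) - a t) / ((Lam lam k : ℚ) - 1)) :
    ∀ j t : ℕ, t ≤ j → k ≤ j - t → L j t = a t :=
  stmt9_general k lam hzero hΛ a harec L hLjj hLrec
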